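/- arXiv:1110.6675 — 6 statements merged into one kernel-verified Lean document; each statement's English description precedes it below -/
import Mathlib

section
/- Let m ≥ 1 and let s_1, …, s_m be nonzero complex numbers (so x_i := s_i² are nonzero). Then there exists a nonzero vector ξ ∈ ℂ^m such that s_i⁴·ξ_i² = s_i²·(∑_{j=1}^m s_j² ξ_j)² for every i = 1,…,m (i.e., L_i(x,ξ) = 0 for all i, where L_i = x_i²ξ_i² − x_i(∑_j x_j ξ_j)²) if and only if there is a choice of signs ε_1, …, ε_m ∈ {−1, 1} with 1 + ∑_{j=1}^m ε_j s_j = 0. -/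
/-- for nonzero `x_i = s_i^2`, the system of principal symbols
`L_i = x_i^2 ξ_i^2 - x_i (∑ x_j ξ_j)^2` has a nontrivial common zero `ξ ≠ 0`
iff `1 + ∑ ε_j s_j = 0` for some choice of signs `ε_j ∈ {-1, 1}`. -/
theorem lauricella_char_variety_torus (m : ℕ) (hm : 1 ≤ m) (s : Fin m → ℂ)
    (hs : ∀ i, s i ≠ 0) :
    (∃ ξ : Fin m → ℂ, ξ ≠ 0 ∧
      ∀ i, s i ^ 4 * ξ i ^ 2 = s i ^ 2 * (∑ j, s j ^ 2 * ξ j) ^ 2) ↔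
    (∃ ε : Fin m → ℂ, (∀ i, ε i = 1 ∨ ε i = -1) ∧ 1 + ∑ j, ε j * s j = 0) := by
  constructor
  · rintro ⟨ξ, hξ, h⟩
    set T := ∑ j, s j ^ 2 * ξ j with hT
    have key : ∀ i, (s i * ξ i) ^ 2 = T ^ 2 := by
      intro i
      have hs2 : (s i) ^ 2 ≠ 0 := pow_ne_zero _ (hs i)
      apply mul_left_cancel₀ hs2
      linear_combination h i
    have hpm : ∀ i, s i * ξ i = T ∨ s i * ξ i = -T := by
      intro i
      have hfac : (s i * ξ i - T) * (s i * ξ i + T) = 0 := by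
        linear_combination key i
      rcases mul_eq_zero.mp hfac with h1 | h1
      · exact Or.inl (sub_eq_zero.mp h1)
      · exact Or.inr (eq_neg_of_add_eq_zero_left h1)
    by_cases hT0 : T = 0
    · exfalso
      apply hξ
      funext i
      have hk := key i
      rw [hT0] at hk
      have h0 : s i * ξ i = 0 := by
        have h2 : (s i * ξ i) ^ 2 = 0 := by simpa using hk
        exact pow_eq_zero_iff (by norm_num : (2:ℕ) ≠ 0) |>.mp h2
      rcases mul_eq_zero.mp h0 with h1 | h1
      · exact absurd h1 (hs i)
      · exact h1
    · refine ⟨fun i => -(s i * ξ i / T), fun i => ?_, ?_⟩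
      · rcases hpm i with h1 | h1
        · right; show -(s i * ξ i / T) = -1; rw [h1, div_self hT0]
        · left; show -(s i * ξ i / T) = 1; rw [h1, neg_div, div_self hT0, neg_neg]
      · have hterm : ∀ j ∈ Finset.univ, -(s j * ξ j / T) * s j * T = -(s j ^ 2 * ξ j) := by
          intro j _
          have hcancel : T * T⁻¹ = 1 := mul_inv_cancel₀ hT0
          linear_combination (-(s j ^ 2 * ξ j)) * hcancel
        have hmul : (1 + ∑ j, -(s j * ξ j / T) * s j) * T = 0 := by
          rw [add_mul, Finset.sum_mul, Finset.sum_congr rfl hterm,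
            Finset.sum_neg_distrib, ← hT]
          ring
        exact (mul_eq_zero.mp hmul).resolve_right hT0
  · rintro ⟨ε, hε, hsum⟩
    have hε2 : ∀ i, ε i ^ 2 = 1 := by
      intro i; rcases hε i with h1 | h1 <;> rw [h1] <;> ring
    refine ⟨fun i => -(ε i / s i), ?_, ?_⟩
    · intro h0
      have := congrFun h0 ⟨0, hm⟩
      simp only [Pi.zero_apply, neg_eq_zero, div_eq_zero_iff] at this
      rcases this with h1 | h1
      · rcases hε ⟨0, hm⟩ with h2 | h2 <;> rw [h2] at h1 <;> simp at h1
      · exact hs _ h1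
    · intro i
      have hTval : (∑ j, s j ^ 2 * -(ε j / s j)) = 1 := by
        have hterm : ∀ j ∈ Finset.univ, s j ^ 2 * -(ε j / s j) = -(ε j * s j) := by
          intro j _
          have hcancel : s j * (s j)⁻¹ = 1 := mul_inv_cancel₀ (hs j)
          linear_combination (-(ε j) * s j) * hcancel
        rw [Finset.sum_congr rfl hterm, Finset.sum_neg_distrib]
        linear_combination -hsum
      rw [hTval]
      have hcancel : s i * (s i)⁻¹ = 1 := mul_inv_cancel₀ (hs i)
      linear_combination (s i ^ 4 * (s i)⁻¹ ^ 2) * hε2 i +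
        (s i ^ 3 * (s i)⁻¹ + s i ^ 2) * hcancel
end

section
/- Let m ≥ 1 and let s_1, …, s_m be nonzero complex numbers (so y_i := s_i² are nonzero). Then there exists a nonzero vector ξ ∈ ℂ^m such that s_i⁶·ξ_i² = (∑_{j=1}^m s_j² ξ_j)² for every i = 1,…,m (i.e., L'_i(y,ξ) = 0 for all i, where L'_i = y_i³ξ_i² − (∑_j y_j ξ_j)²) if and only if there is a choice of signs ε_1, …, ε_m ∈ {−1, 1} with ∏_{j=1}^m s_j + ∑_{j=1}^m ε_j ∏_{k ≠ j} s_k = 0 (equivalently, 1 + ∑_j ε_j/s_j = 0). -/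
/-!
For a common zero `ξ ≠ 0` the sum `T = ∑ s_j² ξ_j` cannot vanish, and the equations say exactly
that `ε_i := -s_i³ ξ_i / T` is a sign. Since `ε_j / s_j = -s_j² ξ_j / T`, summing gives
`∑ ε_j / s_j = -1`. Conversely, for such signs `ξ_i := -ε_i / s_i³` is a common zero with `T = 1`.
Multiplying `1 + ∑ ε_j / s_j` by `∏ s_j` gives the polynomial form of the condition.
-/

open Finset

variable {K ι : Type*} [Field K] [Fintype ι]

theorem prod_add_sum_mul_prod_erase_eq_prod_mul [DecidableEq ι] {s : ι → K}
    (hs : ∀ i, s i ≠ 0) (ε : ι → K) :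
    (∏ j, s j) + ∑ j, ε j * ∏ k ∈ univ.erase j, s k = (∏ j, s j) * (1 + ∑ j, ε j / s j) := by
  have hterm : ∀ j ∈ univ, ε j * ∏ k ∈ univ.erase j, s k = (∏ k, s k) * (ε j / s j) := by
    intro j _
    rw [← mul_prod_erase univ s (mem_univ j)]
    field_simp [hs j]
  rw [sum_congr rfl hterm, ← mul_sum, mul_add, mul_one]

theorem exists_sign_one_add_sum_div_eq_zero {s ξ : ι → K} (hs : ∀ i, s i ≠ 0) (hξ : ξ ≠ 0)
    (h : ∀ i, s i ^ 6 * ξ i ^ 2 = (∑ j, s j ^ 2 * ξ j) ^ 2) :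
    ∃ ε : ι → K, (∀ i, ε i = 1 ∨ ε i = -1) ∧ 1 + ∑ j, ε j / s j = 0 := by
  set T := ∑ j, s j ^ 2 * ξ j with hT
  have hT0 : T ≠ 0 := by
    intro hT0
    obtain ⟨i, hi⟩ := Function.ne_iff.mp hξ
    have hsi := h i
    rw [hT0, zero_pow two_ne_zero, mul_eq_zero] at hsi
    exact hsi.elim (fun h6 => hs i (pow_eq_zero_iff (by norm_num) |>.mp h6))
      fun h2 => hi (pow_eq_zero_iff two_ne_zero |>.mp h2)
  refine ⟨fun i => -(s i ^ 3 * ξ i) / T, fun i => sq_eq_one_iff.mp ?_, ?_⟩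
  · field_simp
    linear_combination h i
  · have hterm : ∀ j ∈ univ, -(s j ^ 3 * ξ j) / T / s j = -(s j ^ 2 * ξ j) / T := by
      intro j _
      field_simp [hs j]
    rw [sum_congr rfl hterm, ← sum_div, sum_neg_distrib, ← hT]
    field_simp
    ring

theorem exists_ne_zero_of_one_add_sum_div_eq_zero [Nonempty ι] {s ε : ι → K}
    (hs : ∀ i, s i ≠ 0) (hε : ∀ i, ε i = 1 ∨ ε i = -1) (hsum : 1 + ∑ j, ε j / s j = 0) :
    ∃ ξ : ι → K, ξ ≠ 0 ∧ ∀ i, s i ^ 6 * ξ i ^ 2 = (∑ j, s j ^ 2 * ξ j) ^ 2 := by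
  have hε0 : ∀ i, ε i ≠ 0 := fun i => by rcases hε i with h | h <;> simp [h]
  have hT : ∑ j, s j ^ 2 * (-ε j / s j ^ 3) = 1 := by
    have hterm : ∀ j ∈ univ, s j ^ 2 * (-ε j / s j ^ 3) = -(ε j / s j) := by
      intro j _
      field_simp [hs j]
    rw [sum_congr rfl hterm, sum_neg_distrib]
    linear_combination -hsum
  refine ⟨fun i => -ε i / s i ^ 3, fun h0 => ?_, fun i => ?_⟩
  · obtain ⟨i⟩ := ‹Nonempty ι›
    have := congrFun h0 i
    simp [hε0 i, hs i] at this
  · rw [hT, one_pow, ← sq_eq_one_iff.mpr (hε i)]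
    field_simp [hs i]

/-- for nonzero `y_i = s_i^2`, the system of principal symbols
`L'_i = y_i^3 ξ_i^2 - (∑ y_j ξ_j)^2` has a nontrivial common zero `ξ ≠ 0`
iff `∏ s_j + ∑ ε_j ∏_{k ≠ j} s_k = 0` (i.e. `1 + ∑ ε_j / s_j = 0`)
for some choice of signs `ε_j ∈ {-1, 1}`. -/
theorem lauricella_char_variety_torus_infinity (m : ℕ) (hm : 1 ≤ m) (s : Fin m → ℂ)
    (hs : ∀ i, s i ≠ 0) :
    (∃ ξ : Fin m → ℂ, ξ ≠ 0 ∧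
      ∀ i, s i ^ 6 * ξ i ^ 2 = (∑ j, s j ^ 2 * ξ j) ^ 2) ↔
    (∃ ε : Fin m → ℂ, (∀ i, ε i = 1 ∨ ε i = -1) ∧
      (∏ j, s j) + ∑ j, ε j * ∏ k ∈ Finset.univ.erase j, s k = 0) := by
  have : Nonempty (Fin m) := ⟨⟨0, hm⟩⟩
  have hprod : ∏ j, s j ≠ 0 := prod_ne_zero_iff.mpr fun i _ => hs i
  simp_rw [prod_add_sum_mul_prod_erase_eq_prod_mul hs, mul_eq_zero, hprod, false_or]
  exact ⟨fun ⟨_, hξ, h⟩ => exists_sign_one_add_sum_div_eq_zero hs hξ h,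
    fun ⟨_, hε, hsum⟩ => exists_ne_zero_of_one_add_sum_div_eq_zero hs hε hsum⟩
end

section
/- Let m ≥ 1 and let Q ∈ ℂ[t_1, …, t_m] be a polynomial such that the linear polynomial 1 + t_1 + ⋯ + t_m divides Q(t_1², …, t_m²) in ℂ[t_1, …, t_m]. Then for every sign vector ε ∈ {−1,1}^m the polynomial 1 + ε_1 t_1 + ⋯ + ε_m t_m divides Q(t_1², …, t_m²), and consequently the full product P(t) = ∏_{ε ∈ {−1,1}^m} (1 + ε_1 t_1 + ⋯ + ε_m t_m) divides Q(t_1², …, t_m²) in ℂ[t_1, …, t_m]. -/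
/-!
Substituting `tᵢ ↦ εᵢ tᵢ` fixes `Q(t₁², …, tₘ²)` and sends `1 + ∑ tᵢ` to `1 + ∑ εᵢ tᵢ`, so every
sign factor divides `Q(t²)`. The factors have total degree one and constant term one, hence are
irreducible and pairwise non-associated, i.e. pairwise relatively prime; in the factorial ring
`ℂ[t]` their product therefore divides `Q(t²)` as well.
-/

open MvPolynomial

/-- The sign `±1 ∈ ℂ` attached to a boolean. -/
noncomputable def signVal (b : Bool) : ℂ := if b then 1 else -1

namespace MvPolynomial

variable {R σ : Type*} [CommSemiring R]

theorem aeval_C_mul_X_aeval_X_sq {ε : σ → R} (hε : ∀ i, ε i ^ 2 = 1) (Q : MvPolynomial σ R) :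
    aeval (fun i => C (ε i) * X i) (aeval (fun i => (X i : MvPolynomial σ R) ^ 2) Q) =
      aeval (fun i => (X i : MvPolynomial σ R) ^ 2) Q := by
  conv_lhs => rw [aeval_eq_bind₁ (fun i => (X i : MvPolynomial σ R) ^ 2), aeval_bind₁]
  congr 2 with i
  simp [mul_pow, ← C_pow, hε i]

variable [Fintype σ]

noncomputable def affineForm (a : σ → R) : MvPolynomial σ R := 1 + ∑ i, C (a i) * X i

theorem affineForm_dvd_aeval_X_sq {ε : σ → R} (hε : ∀ i, ε i ^ 2 = 1) {Q : MvPolynomial σ R}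
    (hQ : (1 + ∑ i, X i) ∣ aeval (fun i => (X i : MvPolynomial σ R) ^ 2) Q) :
    affineForm ε ∣ aeval (fun i => (X i : MvPolynomial σ R) ^ 2) Q := by
  have := map_dvd (aeval fun i => C (ε i) * X i) hQ
  rw [aeval_C_mul_X_aeval_X_sq hε] at this
  simpa [affineForm] using this

theorem coeff_zero_affineForm (a : σ → R) : (affineForm a).coeff 0 = 1 := by
  classical
  simp [affineForm, coeff_sum, coeff_C_mul, coeff_X]

theorem coeff_single_affineForm [DecidableEq σ] (a : σ → R) (j : σ) :
    (affineForm a).coeff (Finsupp.single j 1) = a j := by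
  simp [affineForm, coeff_sum, coeff_C_mul, coeff_X, coeff_one,
    Finsupp.single_eq_single_iff, eq_comm (a := (0 : σ →₀ ℕ))]

theorem affineForm_injective : Function.Injective (affineForm : (σ → R) → MvPolynomial σ R) := by
  classical
  intro a b h
  funext j
  rw [← coeff_single_affineForm a j, h, coeff_single_affineForm]

theorem totalDegree_affineForm [Nontrivial R] {a : σ → R} (ha : a ≠ 0) :
    (affineForm a).totalDegree = 1 := by
  classical
  obtain ⟨j, hj⟩ := Function.ne_iff.mp ha
  refine le_antisymm ?_ ?_
  · refine (totalDegree_add _ _).trans (max_le (by simp) ?_)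
    refine (totalDegree_finsetSum _ _).trans (Finset.sup_le fun i _ => ?_)
    exact (totalDegree_mul _ _).trans (by simp)
  · have := le_totalDegree (s := Finsupp.single j 1) (p := affineForm a)
      (by simpa [mem_support_iff, coeff_single_affineForm] using hj)
    simpa using this

section Domain

variable {R : Type*} [CommRing R] [IsDomain R]

theorem irreducible_affineForm {a : σ → R} (ha : a ≠ 0) : Irreducible (affineForm a) :=
  irreducible_of_totalDegree_eq_one (totalDegree_affineForm ha) fun _ hx =>
    isUnit_of_dvd_one (coeff_zero_affineForm a ▸ hx 0)

theorem isRelPrime_affineForm {a b : σ → R} (ha : a ≠ 0) (hb : b ≠ 0) (hab : a ≠ b) :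
    IsRelPrime (affineForm a) (affineForm b) := by
  refine (irreducible_affineForm ha).isRelPrime_iff_not_dvd.mpr fun hdvd => hab ?_
  obtain ⟨u, hu⟩ :=
    (irreducible_affineForm ha).associated_of_dvd (irreducible_affineForm hb) hdvd
  obtain ⟨r, -, hr⟩ := isUnit_iff_eq_C_of_isReduced.mp u.isUnit
  have hr1 : r = 1 := by
    simpa [hr, mul_comm _ (C r), coeff_C_mul, coeff_zero_affineForm] using
      congr_arg (coeff 0) hu
  rw [hr, hr1, C_1, mul_one] at hu
  exact affineForm_injective hu

end Domain

end MvPolynomial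

theorem signVal_sq (b : Bool) : signVal b ^ 2 = 1 := by
  cases b <;> simp [signVal]

theorem signVal_ne_zero (b : Bool) : signVal b ≠ 0 := by
  cases b <;> simp [signVal]

theorem signVal_injective : Function.Injective signVal := by
  intro a b
  cases a <;> cases b <;> norm_num [signVal]

theorem lauricella_sign_factors_divide_general (m : ℕ)
    (Q : MvPolynomial (Fin m) ℂ)
    (hQ : (1 + ∑ i, X i) ∣
      aeval (fun i : Fin m => (X i : MvPolynomial (Fin m) ℂ) ^ 2) Q) :
    (∀ ε : Fin m → ℂ, (∀ i, ε i = 1 ∨ ε i = -1) →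
      (1 + ∑ i, C (ε i) * X i) ∣
        aeval (fun i : Fin m => (X i : MvPolynomial (Fin m) ℂ) ^ 2) Q) ∧
    (∏ ε : Fin m → Bool, (1 + ∑ i, C (signVal (ε i)) * X i)) ∣
      aeval (fun i : Fin m => (X i : MvPolynomial (Fin m) ℂ) ^ 2) Q := by
  refine ⟨fun ε hε => affineForm_dvd_aeval_X_sq (fun i => ?_) hQ, ?_⟩
  · rcases hε i with h | h <;> simp [h]
  refine Fintype.prod_dvd_of_isRelPrime (s := fun ε : Fin m → Bool => affineForm (signVal ∘ ε))
    (fun ε ε' hne => ?_) fun ε => affineForm_dvd_aeval_X_sq (fun i => signVal_sq (ε i)) hQ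
  obtain ⟨j, -⟩ := Function.ne_iff.mp hne
  exact isRelPrime_affineForm (fun h => signVal_ne_zero _ (congrFun h j))
    (fun h => signVal_ne_zero _ (congrFun h j)) (signVal_injective.comp_left.ne hne)

/-- if `1 + t_1 + ⋯ + t_m` divides `Q(t_1^2, …, t_m^2)`, then so
does `1 + ε_1 t_1 + ⋯ + ε_m t_m` for every sign vector `ε ∈ {-1,1}^m`, and hence
the full product `P(t) = ∏_ε (1 + ε_1 t_1 + ⋯ + ε_m t_m)` divides
`Q(t_1^2, …, t_m^2)`. -/
theorem lauricella_sign_factors_divide (m : ℕ) (hm : 1 ≤ m)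
    (Q : MvPolynomial (Fin m) ℂ)
    (hQ : (1 + ∑ i, X i) ∣
      aeval (fun i : Fin m => (X i : MvPolynomial (Fin m) ℂ) ^ 2) Q) :
    (∀ ε : Fin m → ℂ, (∀ i, ε i = 1 ∨ ε i = -1) →
      (1 + ∑ i, C (ε i) * X i) ∣
        aeval (fun i : Fin m => (X i : MvPolynomial (Fin m) ℂ) ^ 2) Q) ∧
    (∏ ε : Fin m → Bool, (1 + ∑ i, C (signVal (ε i)) * X i)) ∣
      aeval (fun i : Fin m => (X i : MvPolynomial (Fin m) ℂ) ^ 2) Q :=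
  lauricella_sign_factors_divide_general m Q hQ
end

section
/- Fix m ≥ 2 and parameters a, b, c_1, …, c_m ∈ ℂ. In the ℂ-algebra of ℂ-linear endomorphisms of ℂ[x_1, …, x_m], define θ_i = x_i∂_i, θ = ∑_k θ_k, S_i = θ_i(θ_i + c_i − 1), ℓ_i = S_i − x_i(θ + a)(θ + b), and ℓ_{ij} = x_jℓ_i − x_iℓ_j. Then for all i ≠ j the syzygy identity S_j ∘ ℓ_i − S_i ∘ ℓ_j = (θ + a − 1)(θ + b − 1) ∘ ℓ_{ij} holds; equivalently, (θ_j(θ_j − 1) + c_jθ_j)ℓ_i − (θ_i(θ_i − 1) + c_iθ_i)ℓ_j − (θ + a − 1)(θ + b − 1)ℓ_{ij} = 0. -/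
open MvPolynomial

noncomputable section

/-- Multiplication by the variable `x_i`, as a `ℂ`-linear endomorphism of
`ℂ[x_1, …, x_m]`. -/
def xmul (m : ℕ) (i : Fin m) : Module.End ℂ (MvPolynomial (Fin m) ℂ) :=
  LinearMap.mulLeft ℂ (X i)

/-- The `i`-th partial derivative `∂_i`, as a `ℂ`-linear endomorphism. -/
def dOp (m : ℕ) (i : Fin m) : Module.End ℂ (MvPolynomial (Fin m) ℂ) :=
  (pderiv i).toLinearMap

/-- The Euler operator `θ_i = x_i ∂_i`. -/
def thetaOp (m : ℕ) (i : Fin m) : Module.End ℂ (MvPolynomial (Fin m) ℂ) :=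
  xmul m i * dOp m i

/-- `θ = θ_1 + ⋯ + θ_m`. -/
def ThetaOp (m : ℕ) : Module.End ℂ (MvPolynomial (Fin m) ℂ) :=
  ∑ i, thetaOp m i

/-- A scalar `λ ∈ ℂ` acting as `λ · id`. -/
def cOp (m : ℕ) (z : ℂ) : Module.End ℂ (MvPolynomial (Fin m) ℂ) :=
  algebraMap ℂ (Module.End ℂ (MvPolynomial (Fin m) ℂ)) z

/-- `S_i = θ_i (θ_i + c_i − 1)`. -/
def sOp (m : ℕ) (c : Fin m → ℂ) (i : Fin m) :
    Module.End ℂ (MvPolynomial (Fin m) ℂ) :=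
  thetaOp m i * (thetaOp m i + cOp m (c i) - 1)

/-- The `i`-th Lauricella `F_C` operator
`ℓ_i = θ_i(θ_i + c_i − 1) − x_i (θ + a)(θ + b)`. -/
def ell (m : ℕ) (a b : ℂ) (c : Fin m → ℂ) (i : Fin m) :
    Module.End ℂ (MvPolynomial (Fin m) ℂ) :=
  sOp m c i - xmul m i * ((ThetaOp m + cOp m a) * (ThetaOp m + cOp m b))

/-- `ℓ_{ij} = x_j ℓ_i − x_i ℓ_j`. -/
def ellIJ (m : ℕ) (a b : ℂ) (c : Fin m → ℂ) (i j : Fin m) :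
    Module.End ℂ (MvPolynomial (Fin m) ℂ) :=
  xmul m j * ell m a b c i - xmul m i * ell m a b c j

/-! ### Auxiliary lemmas -/

lemma xmul_monomial (m : ℕ) (i : Fin m) (s : Fin m →₀ ℕ) (r : ℂ) :
    xmul m i (monomial s r) = monomial (s + Finsupp.single i 1) r := by
  simp [xmul, LinearMap.mulLeft_apply, X, monomial_mul, add_comm]

lemma theta_monomial (m : ℕ) (i : Fin m) (s : Fin m →₀ ℕ) (r : ℂ) :
    thetaOp m i (monomial s r) = (s i : ℂ) • monomial s r := by
  simp only [thetaOp, Module.End.mul_apply, dOp]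
  rw [show ((pderiv i).toLinearMap : MvPolynomial (Fin m) ℂ →ₗ[ℂ] _) ((monomial s) r)
      = pderiv i (monomial s r) from rfl, pderiv_monomial, xmul_monomial]
  by_cases h : s i = 0
  · simp [h]
  · have : s - Finsupp.single i 1 + Finsupp.single i 1 = s := by
      ext k
      simp only [Finsupp.coe_add, Finsupp.coe_tsub, Pi.add_apply, Pi.sub_apply,
        Finsupp.single_apply]
      rcases eq_or_ne i k with rfl | hk
      · simp; omega
      · simp [hk]
    rw [this, smul_monomial]
    rw [smul_eq_mul, mul_comm]

lemma theta_comm (m : ℕ) (i j : Fin m) :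
    thetaOp m i * thetaOp m j = thetaOp m j * thetaOp m i := by
  apply MvPolynomial.linearMap_ext; intro s
  apply LinearMap.ext; intro r
  simp [Module.End.mul_apply, theta_monomial, map_smul, smul_smul, mul_comm]

lemma theta_xmul (m : ℕ) (i j : Fin m) :
    thetaOp m i * xmul m j =
      xmul m j * thetaOp m i + (if i = j then xmul m j else 0) := by
  apply MvPolynomial.linearMap_ext; intro s
  apply LinearMap.ext; intro r
  rcases eq_or_ne i j with rfl | h
  · simp [Module.End.mul_apply, xmul_monomial, theta_monomial, map_smul,
      Finsupp.single_apply, add_smul]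
  · simp [Module.End.mul_apply, xmul_monomial, theta_monomial, map_smul,
      Finsupp.single_apply, h, Ne.symm h]

lemma Theta_xmul (m : ℕ) (k : Fin m) :
    ThetaOp m * xmul m k = xmul m k * (ThetaOp m + 1) := by
  rw [ThetaOp, Finset.sum_mul]
  have : ∀ i ∈ Finset.univ, thetaOp m i * xmul m k =
      xmul m k * thetaOp m i + (if i = k then xmul m k else 0) := fun i _ => theta_xmul m i k
  rw [Finset.sum_congr rfl this, Finset.sum_add_distrib, ← Finset.mul_sum,
    Finset.sum_ite_eq' Finset.univ k (fun _ => xmul m k)]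
  simp [mul_add, ThetaOp]

lemma Theta_theta_comm (m : ℕ) (i : Fin m) :
    ThetaOp m * thetaOp m i = thetaOp m i * ThetaOp m := by
  rw [ThetaOp, Finset.sum_mul, Finset.mul_sum]
  exact Finset.sum_congr rfl fun j _ => theta_comm m j i

lemma cOp_comm (m : ℕ) (z : ℂ) (f : Module.End ℂ (MvPolynomial (Fin m) ℂ)) :
    cOp m z * f = f * cOp m z :=
  (Algebra.commutes z f)

/-- Abstract noncommutative-ring version of the syzygy computation. -/
lemma syzygy_ring {R : Type*} [Ring R] (Si Sj Xi Xj A A' : R)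
    (hSS : Sj * Si = Si * Sj)
    (h1 : Si * Xj = Xj * Si) (h2 : Sj * Xi = Xi * Sj)
    (h3 : A * Si = Si * A) (h4 : A * Sj = Sj * A)
    (h5 : A' * Xi = Xi * A) (h6 : A' * Xj = Xj * A)
    (h7 : Xi * Xj = Xj * Xi) :
    Sj * (Si - Xi * A) - Si * (Sj - Xj * A) =
      A' * (Xj * (Si - Xi * A) - Xi * (Sj - Xj * A)) := by
  have lhs_eq : Sj * (Si - Xi * A) - Si * (Sj - Xj * A) =
      Xj * (A * Si) - Xi * (A * Sj) := by
    rw [mul_sub, mul_sub, hSS, ← mul_assoc Sj Xi A, h2, ← mul_assoc Si Xj A, h1,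
      mul_assoc Xj Si A, mul_assoc Xi Sj A, ← h3, ← h4]
    abel
  have hc : Xj * (Xi * A) = Xi * (Xj * A) := by rw [← mul_assoc, ← h7, mul_assoc]
  have rhs_eq : A' * (Xj * (Si - Xi * A) - Xi * (Sj - Xj * A)) =
      Xj * (A * Si) - Xi * (A * Sj) := by
    rw [mul_sub Xj, mul_sub Xi, hc]
    have h8 : (Xj * Si - Xi * (Xj * A)) - (Xi * Sj - Xi * (Xj * A))
        = Xj * Si - Xi * Sj := by abel
    rw [h8, mul_sub, ← mul_assoc A' Xj Si, h6, ← mul_assoc A' Xi Sj, h5,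
      mul_assoc Xj A Si, mul_assoc Xi A Sj]
  rw [lhs_eq, rhs_eq]

/-- the syzygy identity
`S_j ℓ_i − S_i ℓ_j = (θ + a − 1)(θ + b − 1) ℓ_{ij}` for `i ≠ j`. -/
theorem lauricella_syzygy_titj (m : ℕ) (hm : 2 ≤ m) (a b : ℂ)
    (c : Fin m → ℂ) (i j : Fin m) (hij : i ≠ j) :
    sOp m c j * ell m a b c i - sOp m c i * ell m a b c j =
      (ThetaOp m + cOp m a - 1) * (ThetaOp m + cOp m b - 1) *
        ellIJ m a b c i j := by
  set T := ThetaOp m with hT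
  set A := (T + cOp m a) * (T + cOp m b) with hA
  set A' := (T + cOp m a - 1) * (T + cOp m b - 1) with hA'
  -- θ_k commutes with T
  have hTt : ∀ k, T * thetaOp m k = thetaOp m k * T := fun k => Theta_theta_comm m k
  -- S_k commutes with anything commuting with θ_k
  have hS_comm : ∀ k (f : Module.End ℂ (MvPolynomial (Fin m) ℂ)),
      f * thetaOp m k = thetaOp m k * f → f * sOp m c k = sOp m c k * f := by
    intro k f hf
    rw [sOp]
    have h1 : f * (thetaOp m k + cOp m (c k) - 1) = (thetaOp m k + cOp m (c k) - 1) * f := by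
      rw [sub_mul, mul_sub, add_mul, mul_add, hf, cOp_comm, one_mul, mul_one]
    rw [← mul_assoc, hf, mul_assoc, h1, ← mul_assoc]
  -- T + z commutes with S_k stuff
  have hAS : ∀ k, A * sOp m c k = sOp m c k * A := by
    intro k
    have hTS : T * sOp m c k = sOp m c k * T := hS_comm k T (hTt k)
    have h1 : (T + cOp m a) * sOp m c k = sOp m c k * (T + cOp m a) := by
      rw [add_mul, mul_add, hTS, cOp_comm]
    have h2 : (T + cOp m b) * sOp m c k = sOp m c k * (T + cOp m b) := by
      rw [add_mul, mul_add, hTS, cOp_comm]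
    rw [hA, mul_assoc, h2, ← mul_assoc, h1, mul_assoc]
  -- S_k commutes with x_l for k ≠ l
  have hSx : ∀ k l : Fin m, k ≠ l → sOp m c k * xmul m l = xmul m l * sOp m c k := by
    intro k l hkl
    have hx : xmul m l * thetaOp m k = thetaOp m k * xmul m l := by
      have := theta_xmul m k l
      rw [if_neg hkl, add_zero] at this
      exact this.symm
    exact (hS_comm k (xmul m l) hx).symm
  -- A' * x_k = x_k * A
  have hA'x : ∀ k, A' * xmul m k = xmul m k * A := by
    intro k
    have hax : ∀ z : ℂ, (T + cOp m z - 1) * xmul m k = xmul m k * (T + cOp m z) := by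
      intro z
      have h0 : T * xmul m k = xmul m k * T + xmul m k := by
        rw [hT, Theta_xmul, mul_add, mul_one]
      rw [sub_mul, add_mul, h0, cOp_comm, one_mul, mul_add]
      abel
    rw [hA', mul_assoc, hax b, ← mul_assoc, hax a, mul_assoc, ← hA]
  -- S_i S_j commute
  have hSS : sOp m c j * sOp m c i = sOp m c i * sOp m c j := by
    apply hS_comm
    have h1 : thetaOp m j * thetaOp m i = thetaOp m i * thetaOp m j := theta_comm m j i
    have h2 : (thetaOp m j + cOp m (c j) - 1) * thetaOp m i
        = thetaOp m i * (thetaOp m j + cOp m (c j) - 1) := by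
      rw [sub_mul, mul_sub, add_mul, mul_add, h1, cOp_comm, one_mul, mul_one]
    rw [sOp, mul_assoc, h2, ← mul_assoc, h1, mul_assoc]
  -- x_i x_j commute
  have hxx : xmul m i * xmul m j = xmul m j * xmul m i := by
    apply LinearMap.ext; intro p
    simp [xmul, Module.End.mul_apply, mul_left_comm]
  have := syzygy_ring (sOp m c i) (sOp m c j) (xmul m i) (xmul m j) A A'
    hSS (hSx i j hij) (hSx j i hij.symm) (hAS i) (hAS j) (hA'x i) (hA'x j) hxx
  simpa [ell, ellIJ, mul_sub] using this

end
end

section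
/- Fix m ≥ 3 and parameters a, b, c_1, …, c_m ∈ ℂ. In the ℂ-algebra of ℂ-linear endomorphisms of ℂ[x_1, …, x_m], with θ_i = x_i∂_i, θ = ∑_k θ_k, S_i = θ_i(θ_i + c_i − 1), ℓ_i = S_i − x_i(θ + a)(θ + b), and ℓ_{ij} = x_jℓ_i − x_iℓ_j, the following identity holds for pairwise distinct indices i, j, k: x_i²x_j∂_i² ∘ ℓ_k − x_k²∂_k² ∘ ℓ_{ij} = S_j ∘ ℓ_{ki} + x_kS_i ∘ ℓ_j − c_ix_jθ_i ∘ ℓ_k + c_kθ_k ∘ ℓ_{ij}, where ℓ_{ki} = x_iℓ_k − x_kℓ_i. -/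
open MvPolynomial

noncomputable section

/-! ### Auxiliary lemmas -/

lemma pderiv_comm' {σ R : Type*} [CommSemiring R] (i j : σ) (p : MvPolynomial σ R) :
    pderiv i (pderiv j p) = pderiv j (pderiv i p) := by
  classical
  by_cases hij : i = j
  · subst hij; rfl
  induction p using MvPolynomial.induction_on with
  | C a => simp
  | add p q hp hq => simp [hp, hq]
  | mul_X p n ih =>
    by_cases hni : n = i <;> by_cases hnj : n = j <;>
      simp [pderiv_mul, ih, hni, hnj, Pi.single_apply, hij, Ne.symm hij] <;> ring

lemma xmul_commute (m : ℕ) (i j : Fin m) : Commute (xmul m i) (xmul m j) := by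
  show _ = _
  ext p
  simp [xmul, Module.End.mul_apply]
  ring

lemma dx_commute (m : ℕ) {i j : Fin m} (h : i ≠ j) :
    Commute (dOp m i) (xmul m j) := by
  show _ = _
  ext p
  simp [xmul, dOp, Module.End.mul_apply, pderiv_mul, pderiv_X_of_ne (Ne.symm h)]

lemma dd_commute (m : ℕ) (i j : Fin m) : Commute (dOp m i) (dOp m j) := by
  show dOp m i * dOp m j = dOp m j * dOp m i
  apply LinearMap.ext; intro p
  exact pderiv_comm' i j p

lemma c_commute (m : ℕ) (z : ℂ) (f : Module.End ℂ (MvPolynomial (Fin m) ℂ)) :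
    Commute (cOp m z) f :=
  Algebra.commutes z f

lemma theta_x_commute (m : ℕ) {i j : Fin m} (h : i ≠ j) :
    Commute (thetaOp m i) (xmul m j) :=
  (xmul_commute m i j).mul_left (dx_commute m h)

lemma theta_theta_commute (m : ℕ) {i j : Fin m} (h : i ≠ j) :
    Commute (thetaOp m i) (thetaOp m j) :=
  ((xmul_commute m i j).mul_right ((dx_commute m (Ne.symm h)).symm)).mul_left
    ((dx_commute m h).mul_right (dd_commute m i j))

lemma s_x_commute (m : ℕ) (c : Fin m → ℂ) {i j : Fin m} (h : i ≠ j) :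
    Commute (sOp m c i) (xmul m j) :=
  (theta_x_commute m h).mul_left
    (((theta_x_commute m h).add_left (c_commute m (c i) (xmul m j))).sub_left
      (Commute.one_left _))

lemma s_s_commute (m : ℕ) (c : Fin m → ℂ) {i j : Fin m} (h : i ≠ j) :
    Commute (sOp m c i) (sOp m c j) := by
  have ht : Commute (thetaOp m i) (sOp m c j) :=
    (theta_theta_commute m h).mul_right
      (((theta_theta_commute m h).add_right
        ((c_commute m (c j) (thetaOp m i)).symm)).sub_right (Commute.one_right _))
  exact ht.mul_left
    ((ht.add_left (c_commute m (c i) (sOp m c j))).sub_left (Commute.one_left _))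

lemma dx_self (m : ℕ) (i : Fin m) :
    dOp m i * xmul m i = xmul m i * dOp m i + 1 := by
  ext p
  simp [xmul, dOp, Module.End.mul_apply, pderiv_mul]

lemma x2d2 (m : ℕ) (c : Fin m → ℂ) (i : Fin m) :
    xmul m i ^ 2 * dOp m i ^ 2 = sOp m c i - cOp m (c i) * thetaOp m i := by
  have hθc : cOp m (c i) * thetaOp m i = thetaOp m i * cOp m (c i) :=
    Algebra.commutes _ _
  have e1 : thetaOp m i * thetaOp m i = xmul m i ^ 2 * dOp m i ^ 2 + thetaOp m i := by
    calc thetaOp m i * thetaOp m i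
        = xmul m i * ((dOp m i * xmul m i) * dOp m i) := by
          rw [thetaOp]; noncomm_ring
      _ = xmul m i * ((xmul m i * dOp m i + 1) * dOp m i) := by rw [dx_self]
      _ = xmul m i ^ 2 * dOp m i ^ 2 + thetaOp m i := by rw [thetaOp]; noncomm_ring
  rw [sOp, show thetaOp m i * (thetaOp m i + cOp m (c i) - 1)
      = thetaOp m i * thetaOp m i + thetaOp m i * cOp m (c i) - thetaOp m i from by
        rw [mul_sub, mul_add, mul_one], e1, ← hθc]
  noncomm_ring

lemma aux_spair {R : Type*} [Ring R] (xi xj xk si sj sk bb : R)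
    (hxij : xj * xi = xi * xj) (hxik : xk * xi = xi * xk) (hxjk : xk * xj = xj * xk)
    (hsij : sj * si = si * sj) (hsik : sk * si = si * sk) (hsjk : sk * sj = sj * sk)
    (hisj : xi * sj = sj * xi) (hisk : xi * sk = sk * xi)
    (hjsi : xj * si = si * xj) (hjsk : xj * sk = sk * xj)
    (hksi : xk * si = si * xk) (hksj : xk * sj = sj * xk) :
    xj * si * (sk - xk * bb) - sk * (xj * (si - xi * bb) - xi * (sj - xj * bb))
      - (sj * (xi * (sk - xk * bb) - xk * (si - xi * bb)) + xk * si * (sj - xj * bb)) = 0 := by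
  have hxij' : ∀ t, xj * (xi * t) = xi * (xj * t) := fun t => by rw [← mul_assoc, hxij, mul_assoc]
  have hxik' : ∀ t, xk * (xi * t) = xi * (xk * t) := fun t => by rw [← mul_assoc, hxik, mul_assoc]
  have hxjk' : ∀ t, xk * (xj * t) = xj * (xk * t) := fun t => by rw [← mul_assoc, hxjk, mul_assoc]
  have hsij' : ∀ t, sj * (si * t) = si * (sj * t) := fun t => by rw [← mul_assoc, hsij, mul_assoc]
  have hsik' : ∀ t, sk * (si * t) = si * (sk * t) := fun t => by rw [← mul_assoc, hsik, mul_assoc]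
  have hsjk' : ∀ t, sk * (sj * t) = sj * (sk * t) := fun t => by rw [← mul_assoc, hsjk, mul_assoc]
  have hisj' : ∀ t, xi * (sj * t) = sj * (xi * t) := fun t => by rw [← mul_assoc, hisj, mul_assoc]
  have hisk' : ∀ t, xi * (sk * t) = sk * (xi * t) := fun t => by rw [← mul_assoc, hisk, mul_assoc]
  have hjsi' : ∀ t, xj * (si * t) = si * (xj * t) := fun t => by rw [← mul_assoc, hjsi, mul_assoc]
  have hjsk' : ∀ t, xj * (sk * t) = sk * (xj * t) := fun t => by rw [← mul_assoc, hjsk, mul_assoc]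
  have hksi' : ∀ t, xk * (si * t) = si * (xk * t) := fun t => by rw [← mul_assoc, hksi, mul_assoc]
  have hksj' : ∀ t, xk * (sj * t) = sj * (xk * t) := fun t => by rw [← mul_assoc, hksj, mul_assoc]
  simp only [mul_sub, sub_mul, mul_add, add_mul, mul_assoc,
    hxij, hxik, hxjk, hsij, hsik, hsjk, hisj, hisk, hjsi, hjsk, hksi, hksj,
    hxij', hxik', hxjk', hsij', hsik', hsjk', hisj', hisk', hjsi', hjsk', hksi', hksj']
  abel

/-- the identity (dehomogenization of `sp(T_k, T_{ij})`)
`x_i²x_j∂_i² ℓ_k − x_k²∂_k² ℓ_{ij}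
  = S_j ℓ_{ki} + x_k S_i ℓ_j − c_i x_j θ_i ℓ_k + c_k θ_k ℓ_{ij}`
for pairwise distinct `i, j, k`, where `ℓ_{ki} = x_i ℓ_k − x_k ℓ_i`. -/
theorem lauricella_spair_tk_tij (m : ℕ) (hm : 3 ≤ m) (a b : ℂ)
    (c : Fin m → ℂ) (i j k : Fin m)
    (hij : i ≠ j) (hik : i ≠ k) (hjk : j ≠ k) :
    xmul m i ^ 2 * xmul m j * dOp m i ^ 2 * ell m a b c k -
      xmul m k ^ 2 * dOp m k ^ 2 * ellIJ m a b c i j =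
    sOp m c j * ellIJ m a b c k i + xmul m k * sOp m c i * ell m a b c j -
      cOp m (c i) * xmul m j * thetaOp m i * ell m a b c k +
      cOp m (c k) * thetaOp m k * ellIJ m a b c i j := by
  have red : xmul m j * sOp m c i * ell m a b c k - sOp m c k * ellIJ m a b c i j
      - (sOp m c j * ellIJ m a b c k i + xmul m k * sOp m c i * ell m a b c j) = 0 := by
    simp only [ellIJ, ell]
    exact aux_spair (xmul m i) (xmul m j) (xmul m k)
      (sOp m c i) (sOp m c j) (sOp m c k)
      ((ThetaOp m + cOp m a) * (ThetaOp m + cOp m b))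
      (xmul_commute m j i).eq (xmul_commute m k i).eq (xmul_commute m k j).eq
      (s_s_commute m c (Ne.symm hij)).eq (s_s_commute m c (Ne.symm hik)).eq
      (s_s_commute m c (Ne.symm hjk)).eq
      (s_x_commute m c (Ne.symm hij)).symm.eq (s_x_commute m c (Ne.symm hik)).symm.eq
      (s_x_commute m c hij).symm.eq (s_x_commute m c (Ne.symm hjk)).symm.eq
      (s_x_commute m c hik).symm.eq (s_x_commute m c hjk).symm.eq
  have h1 : xmul m i ^ 2 * xmul m j * dOp m i ^ 2
      = xmul m j * (sOp m c i - cOp m (c i) * thetaOp m i) := by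
    rw [((xmul_commute m i j).pow_left 2).eq, mul_assoc, x2d2]
  have h2 : xmul m k ^ 2 * dOp m k ^ 2 = sOp m c k - cOp m (c k) * thetaOp m k :=
    x2d2 m c k
  have h3 : cOp m (c i) * xmul m j = xmul m j * cOp m (c i) := Algebra.commutes _ _
  rw [← sub_eq_zero, ← red, h1, h2, h3]
  simp only [mul_sub, sub_mul, mul_assoc]
  abel
end
end

section
/- Fix m ≥ 3 and parameters a, b, c_1, …, c_m ∈ ℂ. In the ℂ-algebra of ℂ-linear endomorphisms of ℂ[x_1, …, x_m], with θ_i = x_i∂_i, θ = ∑_k θ_k, S_i = θ_i(θ_i + c_i − 1), ℓ_i = S_i − x_i(θ + a)(θ + b), and ℓ_{ij} = x_jℓ_i − x_iℓ_j, the following identity holds for pairwise distinct indices i, j, k: x_jx_k∂_j² ∘ ℓ_{ij} − x_i²∂_i² ∘ ℓ_{jk} = ( S_k + (2 − c_j)x_k∂_j ) ∘ ℓ_{ij} + (c_j − 2) ∘ ℓ_{ik} + ( (2 − c_j)x_i∂_j + c_iθ_i − x_iθ_j∂_j ) ∘ ℓ_{jk}. -/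
open MvPolynomial

noncomputable section

/- ===== auxiliary lemmas ===== -/

lemma xmul_comm' (m : ℕ) (p q : Fin m) : xmul m p * xmul m q = xmul m q * xmul m p := by
  apply LinearMap.ext; intro f
  simp [xmul, Module.End.mul_apply]
  ring

lemma pderiv_pderiv_comm (m : ℕ) (p q : Fin m) (f : MvPolynomial (Fin m) ℂ) :
    pderiv p (pderiv q f) = pderiv q (pderiv p f) := by
  classical
  induction f using MvPolynomial.induction_on with
  | C z => simp
  | add f g hf hg => simp [hf, hg]
  | mul_X f n hf =>
    simp only [pderiv_mul, pderiv_X, map_add, hf, Pi.single_apply]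
    split_ifs with h1 h2 <;> simp [pderiv_C] <;> ring

lemma dOp_comm' (m : ℕ) (p q : Fin m) : dOp m p * dOp m q = dOp m q * dOp m p := by
  apply LinearMap.ext; intro f
  simp [dOp, Module.End.mul_apply, pderiv_pderiv_comm]

lemma dOp_xmul (m : ℕ) (p q : Fin m) :
    dOp m p * xmul m q = xmul m q * dOp m p + if p = q then 1 else 0 := by
  classical
  apply LinearMap.ext; intro f
  simp [dOp, xmul, Module.End.mul_apply, LinearMap.add_apply, pderiv_mul, pderiv_X,
    Pi.single_apply, eq_comm]
  split_ifs with h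
  · exact (Module.End.one_apply f).symm
  · exact (LinearMap.zero_apply (M₂ := MvPolynomial (Fin m) ℂ) f).symm

lemma thetaOp_xmul (m : ℕ) (l i : Fin m) :
    thetaOp m l * xmul m i = xmul m i * thetaOp m l + if l = i then xmul m i else 0 := by
  unfold thetaOp
  rw [mul_assoc, dOp_xmul, mul_add, ← mul_assoc, xmul_comm' m l i, mul_assoc]
  split_ifs with h
  · subst h; rw [mul_one]
  · rw [mul_zero]

lemma dOp_thetaOp (m : ℕ) (l i : Fin m) :
    dOp m i * thetaOp m l = thetaOp m l * dOp m i + if i = l then dOp m i else 0 := by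
  unfold thetaOp
  rw [← mul_assoc, dOp_xmul, add_mul, mul_assoc, dOp_comm' m i l, ← mul_assoc]
  split_ifs with h
  · subst h; rw [one_mul]
  · rw [zero_mul]

lemma ThetaOp_xmul (m : ℕ) (i : Fin m) :
    ThetaOp m * xmul m i = xmul m i * ThetaOp m + xmul m i := by
  unfold ThetaOp
  rw [Finset.sum_mul]
  simp_rw [thetaOp_xmul]
  rw [Finset.sum_add_distrib, ← Finset.mul_sum, Finset.sum_ite_eq' Finset.univ i
    (fun _ => xmul m i), if_pos (Finset.mem_univ i)]

lemma dOp_ThetaOp (m : ℕ) (i : Fin m) :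
    dOp m i * ThetaOp m = ThetaOp m * dOp m i + dOp m i := by
  unfold ThetaOp
  rw [Finset.mul_sum]
  simp_rw [dOp_thetaOp]
  rw [Finset.sum_add_distrib, ← Finset.sum_mul, Finset.sum_ite_eq Finset.univ i
    (fun _ => dOp m i), if_pos (Finset.mem_univ i)]


def ellAbs {R : Type*} [Ring R] [Algebra ℂ R] (a b ci : ℂ) (T xi di : R) : R :=
  (xi * di) * ((xi * di) + algebraMap ℂ R ci - 1) -
    xi * ((T + algebraMap ℂ R a) * (T + algebraMap ℂ R b))

set_option maxHeartbeats 2000000 in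
theorem key {R : Type*} [Ring R] [Algebra ℂ R] (a b ci cj ck : ℂ)
    (T xi xj xk di dj dk : R)
    (hxx1 : xj * xi = xi * xj) (hxx2 : xk * xi = xi * xk) (hxx3 : xk * xj = xj * xk)
    (hdd1 : dj * di = di * dj) (hdd2 : dk * di = di * dk) (hdd3 : dk * dj = dj * dk)
    (hii : di * xi = xi * di + 1) (hjj : dj * xj = xj * dj + 1) (hkk : dk * xk = xk * dk + 1)
    (hdxij : di * xj = xj * di) (hdxik : di * xk = xk * di)
    (hdxji : dj * xi = xi * dj) (hdxjk : dj * xk = xk * dj)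
    (hdxki : dk * xi = xi * dk) (hdxkj : dk * xj = xj * dk)
    (hTi : T * xi = xi * T + xi) (hTj : T * xj = xj * T + xj) (hTk : T * xk = xk * T + xk)
    (hiT : di * T = T * di + di) (hjT : dj * T = T * dj + dj) (hkT : dk * T = T * dk + dk) :
    xj * xk * dj ^ 2 * (xj * ellAbs a b ci T xi di - xi * ellAbs a b cj T xj dj) -
      xi ^ 2 * di ^ 2 * (xk * ellAbs a b cj T xj dj - xj * ellAbs a b ck T xk dk) =
    ((xk * dk) * ((xk * dk) + algebraMap ℂ R ck - 1) + algebraMap ℂ R (2 - cj) * (xk * dj)) *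
        (xj * ellAbs a b ci T xi di - xi * ellAbs a b cj T xj dj) +
      algebraMap ℂ R (cj - 2) * (xk * ellAbs a b ci T xi di - xi * ellAbs a b ck T xk dk) +
      (algebraMap ℂ R (2 - cj) * (xi * dj) + algebraMap ℂ R ci * (xi * di) -
          xi * (xj * dj) * dj) *
        (xk * ellAbs a b cj T xj dj - xj * ellAbs a b ck T xk dk) := by
  have hxx1' : ∀ t : R, xj * (xi * t) = xi * (xj * t) := fun t => by
    rw [← mul_assoc, hxx1, mul_assoc]
  have hxx2' : ∀ t : R, xk * (xi * t) = xi * (xk * t) := fun t => by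
    rw [← mul_assoc, hxx2, mul_assoc]
  have hxx3' : ∀ t : R, xk * (xj * t) = xj * (xk * t) := fun t => by
    rw [← mul_assoc, hxx3, mul_assoc]
  have hdd1' : ∀ t : R, dj * (di * t) = di * (dj * t) := fun t => by
    rw [← mul_assoc, hdd1, mul_assoc]
  have hdd2' : ∀ t : R, dk * (di * t) = di * (dk * t) := fun t => by
    rw [← mul_assoc, hdd2, mul_assoc]
  have hdd3' : ∀ t : R, dk * (dj * t) = dj * (dk * t) := fun t => by
    rw [← mul_assoc, hdd3, mul_assoc]
  have hii' : ∀ t : R, di * (xi * t) = xi * (di * t) + t := fun t => by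
    rw [← mul_assoc, hii, add_mul, one_mul, mul_assoc]
  have hjj' : ∀ t : R, dj * (xj * t) = xj * (dj * t) + t := fun t => by
    rw [← mul_assoc, hjj, add_mul, one_mul, mul_assoc]
  have hkk' : ∀ t : R, dk * (xk * t) = xk * (dk * t) + t := fun t => by
    rw [← mul_assoc, hkk, add_mul, one_mul, mul_assoc]
  have hdxij' : ∀ t : R, di * (xj * t) = xj * (di * t) := fun t => by
    rw [← mul_assoc, hdxij, mul_assoc]
  have hdxik' : ∀ t : R, di * (xk * t) = xk * (di * t) := fun t => by
    rw [← mul_assoc, hdxik, mul_assoc]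
  have hdxji' : ∀ t : R, dj * (xi * t) = xi * (dj * t) := fun t => by
    rw [← mul_assoc, hdxji, mul_assoc]
  have hdxjk' : ∀ t : R, dj * (xk * t) = xk * (dj * t) := fun t => by
    rw [← mul_assoc, hdxjk, mul_assoc]
  have hdxki' : ∀ t : R, dk * (xi * t) = xi * (dk * t) := fun t => by
    rw [← mul_assoc, hdxki, mul_assoc]
  have hdxkj' : ∀ t : R, dk * (xj * t) = xj * (dk * t) := fun t => by
    rw [← mul_assoc, hdxkj, mul_assoc]
  have hTi' : ∀ t : R, T * (xi * t) = xi * (T * t) + xi * t := fun t => by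
    rw [← mul_assoc, hTi, add_mul, mul_assoc]
  have hTj' : ∀ t : R, T * (xj * t) = xj * (T * t) + xj * t := fun t => by
    rw [← mul_assoc, hTj, add_mul, mul_assoc]
  have hTk' : ∀ t : R, T * (xk * t) = xk * (T * t) + xk * t := fun t => by
    rw [← mul_assoc, hTk, add_mul, mul_assoc]
  have hiT' : ∀ t : R, di * (T * t) = T * (di * t) + di * t := fun t => by
    rw [← mul_assoc, hiT, add_mul, mul_assoc]
  have hjT' : ∀ t : R, dj * (T * t) = T * (dj * t) + dj * t := fun t => by
    rw [← mul_assoc, hjT, add_mul, mul_assoc]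
  have hkT' : ∀ t : R, dk * (T * t) = T * (dk * t) + dk * t := fun t => by
    rw [← mul_assoc, hkT, add_mul, mul_assoc]
  simp only [ellAbs, Algebra.algebraMap_eq_smul_one, pow_two, mul_add, add_mul, mul_sub,
    sub_mul, mul_assoc, smul_mul_assoc, mul_smul_comm, one_mul, mul_one, smul_smul,
    smul_add, smul_sub,
    hxx1, hxx2, hxx3, hdd1, hdd2, hdd3, hii, hjj, hkk, hdxij, hdxik, hdxji, hdxjk,
    hdxki, hdxkj, hTi, hTj, hTk, hiT, hjT, hkT,
    hxx1', hxx2', hxx3', hdd1', hdd2', hdd3', hii', hjj', hkk', hdxij', hdxik', hdxji',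
    hdxjk', hdxki', hdxkj', hTi', hTj', hTk', hiT', hjT', hkT']
  module

/-- the identity (dehomogenization of `sp(T_{ij}, T_{jk})`)
`x_jx_k∂_j² ℓ_{ij} − x_i²∂_i² ℓ_{jk}
  = (S_k + (2 − c_j) x_k ∂_j) ℓ_{ij} + (c_j − 2) ℓ_{ik}
    + ((2 − c_j) x_i ∂_j + c_i θ_i − x_i θ_j ∂_j) ℓ_{jk}`
for pairwise distinct `i, j, k`. -/
theorem lauricella_spair_tij_tjk (m : ℕ) (hm : 3 ≤ m) (a b : ℂ)
    (c : Fin m → ℂ) (i j k : Fin m)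
    (hij : i ≠ j) (hik : i ≠ k) (hjk : j ≠ k) :
    xmul m j * xmul m k * dOp m j ^ 2 * ellIJ m a b c i j -
      xmul m i ^ 2 * dOp m i ^ 2 * ellIJ m a b c j k =
    (sOp m c k + cOp m (2 - c j) * (xmul m k * dOp m j)) * ellIJ m a b c i j +
      cOp m (c j - 2) * ellIJ m a b c i k +
      (cOp m (2 - c j) * (xmul m i * dOp m j) + cOp m (c i) * thetaOp m i -
        xmul m i * thetaOp m j * dOp m j) * ellIJ m a b c j k := by
  have Hii : dOp m i * xmul m i = xmul m i * dOp m i + 1 := by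
    simpa using dOp_xmul m i i
  have Hjj : dOp m j * xmul m j = xmul m j * dOp m j + 1 := by
    simpa using dOp_xmul m j j
  have Hkk : dOp m k * xmul m k = xmul m k * dOp m k + 1 := by
    simpa using dOp_xmul m k k
  have Hij : dOp m i * xmul m j = xmul m j * dOp m i := by
    simpa [hij] using dOp_xmul m i j
  have Hik : dOp m i * xmul m k = xmul m k * dOp m i := by
    simpa [hik] using dOp_xmul m i k
  have Hji : dOp m j * xmul m i = xmul m i * dOp m j := by
    simpa [hij.symm] using dOp_xmul m j i
  have Hjk : dOp m j * xmul m k = xmul m k * dOp m j := by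
    simpa [hjk] using dOp_xmul m j k
  have Hki : dOp m k * xmul m i = xmul m i * dOp m k := by
    simpa [hik.symm] using dOp_xmul m k i
  have Hkj : dOp m k * xmul m j = xmul m j * dOp m k := by
    simpa [hjk.symm] using dOp_xmul m k j
  exact key a b (c i) (c j) (c k) (ThetaOp m) (xmul m i) (xmul m j) (xmul m k)
    (dOp m i) (dOp m j) (dOp m k)
    (xmul_comm' m j i) (xmul_comm' m k i) (xmul_comm' m k j)
    (dOp_comm' m j i) (dOp_comm' m k i) (dOp_comm' m k j)
    Hii Hjj Hkk Hij Hik Hji Hjk Hki Hkj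
    (ThetaOp_xmul m i) (ThetaOp_xmul m j) (ThetaOp_xmul m k)
    (dOp_ThetaOp m i) (dOp_ThetaOp m j) (dOp_ThetaOp m k)

end
end
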